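/- Let w ∈ S_n, w ≠ w₀, and suppose (i,j) is an addable cell of dom(w) with j = α(w). Then i+1 ∈ φ_i(w), i.e., ℓ(w t_{i,i+1}) = ℓ(w) + 1, and moreover φ_i(w) \ {i+1} ⊆ φ_{i+1}(w s_i). -/

import Mathlib

/-- Coxeter length of a permutation of `Fin n`: number of inversions. -/
def len {n : ℕ} (w : Equiv.Perm (Fin n)) : ℕ :=
  (Finset.univ.filter (fun p : Fin n × Fin n => p.1 < p.2 ∧ w p.2 < w p.1)).card

/-- The longest permutation `w₀` of `S_n` (reversal). -/
def longest (n : ℕ) : Equiv.Perm (Fin n) := Fin.revPerm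

/-- The simple transposition `s_i` (1-based index `i ∈ [n-1]`), exchanging
positions `i` and `i+1` of the one-line notation. -/
def simpleRefl (n i : ℕ) : Equiv.Perm (Fin n) :=
  if h : 1 ≤ i ∧ i < n then Equiv.swap ⟨i - 1, by omega⟩ ⟨i, by omega⟩ else 1

/-- The Hecke (Demazure) up-operator: `w * τ_i = w` if `ℓ(w s_i) < ℓ(w)`, else `w s_i`. -/
def heckeStar {n : ℕ} (w : Equiv.Perm (Fin n)) (i : ℕ) : Equiv.Perm (Fin n) :=
  if len (w * simpleRefl n i) < len w then w else w * simpleRefl n i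

/-- The down-operator: `w □ τ_i = w` if `ℓ(w s_i) > ℓ(w)`, else `w s_i`. -/
def heckeSq {n : ℕ} (w : Equiv.Perm (Fin n)) (i : ℕ) : Equiv.Perm (Fin n) :=
  if len w < len (w * simpleRefl n i) then w else w * simpleRefl n i

/-- The value `w(i)` in 1-based one-line notation, for the permutation of
`{1, …, n}` determined by `w : Equiv.Perm (Fin n)` (extended by the identity
outside `[1,n]`, matching the embedding `S_n ↪ S_+`). -/
def act {n : ℕ} (w : Equiv.Perm (Fin n)) (i : ℕ) : ℕ :=
  if h : 1 ≤ i ∧ i ≤ n then ((w ⟨i - 1, by omega⟩ : Fin n) : ℕ) + 1 else i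

/-- The Rothe diagram `D(w) = {(i,j) : w(i) > j and w⁻¹(j) > i}`, 1-based. -/
def rd {n : ℕ} (w : Equiv.Perm (Fin n)) : Set (ℕ × ℕ) :=
  {p | 1 ≤ p.1 ∧ 1 ≤ p.2 ∧ p.2 < act w p.1 ∧ p.1 < act w⁻¹ p.2}

/-- The dominant part `dom(w)` of the Rothe diagram: the largest Young-diagram
shaped subset, i.e. cells whose whole upper-left rectangle lies in `D(w)`. -/
def domP {n : ℕ} (w : Equiv.Perm (Fin n)) : Set (ℕ × ℕ) :=
  {p | 1 ≤ p.1 ∧ 1 ≤ p.2 ∧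
    ∀ q : ℕ × ℕ, 1 ≤ q.1 → 1 ≤ q.2 → q.1 ≤ p.1 → q.2 ≤ p.2 → q ∈ rd w}

/-- `(i,j)` is an addable cell of `dom(w)`. -/
def addableP {n : ℕ} (w : Equiv.Perm (Fin n)) (i j : ℕ) : Prop :=
  1 ≤ i ∧ 1 ≤ j ∧ (i, j) ∉ domP w ∧
    (1 < i → (i - 1, j) ∈ domP w) ∧ (1 < j → (i, j - 1) ∈ domP w)

/-- `(i,j)` is an addable cell of `dom(w)` with `j = α(w)`, i.e. `i + j ≤ n` and
`j` is the leftmost column containing an addable cell `(i',j')` with `i'+j' ≤ n`. -/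
def alphaCell {n : ℕ} (w : Equiv.Perm (Fin n)) (i j : ℕ) : Prop :=
  addableP w i j ∧ i + j ≤ n ∧
    ∀ i' j', addableP w i' j' → i' + j' ≤ n → j ≤ j'

/-- `(a, w(a))` is a neighbor of `(i, w(i))` in the graph of `w` (1-based):
`i ≤ a`, `w(i) ≤ w(a)`, `(a, w(a)) ≠ (i, w(i))`, and no other point of the
graph of `w` lies in the rectangle `[i,a] × [w(i), w(a)]`. -/
def isNbrP {n : ℕ} (w : Equiv.Perm (Fin n)) (i a : ℕ) : Prop :=
  i ≤ a ∧ act w i ≤ act w a ∧ (a, act w a) ≠ (i, act w i) ∧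
    ∀ a', i ≤ a' → a' ≤ a → act w i ≤ act w a' → act w a' ≤ act w a →
      a' = i ∨ a' = a

/-!
Every addable cell `(i, j)` of `dom(w)` is a graph point, `w(i) = j`: the cells just above and
just to the left of it lie in `D(w)`, which forces `w(i) ≥ j` and `w⁻¹(j) ≥ i`, while `(i, j)`
itself is not in `D(w)`. For `j = α(w)`, if `m = w(i+1)` were smaller than `j`, then column `m`
of `dom(w)` would end in row `i` and `(i+1, m)` would be an addable cell in an earlier column
with `(i+1) + m ≤ n`. Hence `w(i) < w(i+1)`, so `s_i` adds one inversion, and the neighbours of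
`(i, w(i))` other than `i+1` see no change when `(i, w(i))` moves to `(i+1, w(i))`.
-/

section Act

variable {n : ℕ}

lemma act_of_mem (w : Equiv.Perm (Fin n)) {x : ℕ} (h1 : 1 ≤ x) (h2 : x ≤ n) :
    act w x = (w ⟨x - 1, by omega⟩ : ℕ) + 1 :=
  dif_pos ⟨h1, h2⟩

lemma act_of_not_mem (w : Equiv.Perm (Fin n)) {x : ℕ} (h : ¬(1 ≤ x ∧ x ≤ n)) : act w x = x :=
  dif_neg h

lemma act_mem (w : Equiv.Perm (Fin n)) {x : ℕ} (h1 : 1 ≤ x) (h2 : x ≤ n) :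
    1 ≤ act w x ∧ act w x ≤ n := by
  have := (w ⟨x - 1, by omega⟩).isLt
  rw [act_of_mem w h1 h2]
  omega

lemma one_le_act (w : Equiv.Perm (Fin n)) {x : ℕ} (h : 1 ≤ x) : 1 ≤ act w x := by
  unfold act
  split_ifs <;> omega

@[simp]
lemma act_one (x : ℕ) : act (1 : Equiv.Perm (Fin n)) x = x := by
  unfold act
  split_ifs
  · simp only [Equiv.Perm.one_apply]
    omega
  · rfl

lemma act_mul (v u : Equiv.Perm (Fin n)) (x : ℕ) : act (v * u) x = act v (act u x) := by
  by_cases hx : 1 ≤ x ∧ x ≤ n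
  · obtain ⟨h1, h2⟩ := act_mem u hx.1 hx.2
    have hu : (⟨act u x - 1, by omega⟩ : Fin n) = u ⟨x - 1, by omega⟩ :=
      Fin.ext (by simp only [act_of_mem u hx.1 hx.2, add_tsub_cancel_right])
    rw [act_of_mem _ hx.1 hx.2, act_of_mem v h1 h2, hu, Equiv.Perm.mul_apply]
  · rw [act_of_not_mem _ hx, act_of_not_mem _ hx, act_of_not_mem _ hx]

@[simp]
lemma act_inv_act (w : Equiv.Perm (Fin n)) (x : ℕ) : act w⁻¹ (act w x) = x := by
  rw [← act_mul, inv_mul_cancel, act_one]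

@[simp]
lemma act_act_inv (w : Equiv.Perm (Fin n)) (x : ℕ) : act w (act w⁻¹ x) = x := by
  simpa using act_inv_act w⁻¹ x

lemma act_injective (w : Equiv.Perm (Fin n)) : Function.Injective (act w) :=
  Function.LeftInverse.injective (act_inv_act w)

lemma act_simpleRefl {i : ℕ} (h1 : 1 ≤ i) (h2 : i < n) (x : ℕ) :
    act (simpleRefl n i) x = Equiv.swap i (i + 1) x := by
  rw [simpleRefl, dif_pos ⟨h1, h2⟩, Equiv.swap_apply_def]
  by_cases hx : 1 ≤ x ∧ x ≤ n
  · rw [act_of_mem _ hx.1 hx.2, Equiv.swap_apply_def]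
    split_ifs <;> simp only [Fin.mk.injEq] at * <;> omega
  · rw [act_of_not_mem _ hx]
    split_ifs <;> omega

lemma act_mul_simpleRefl {i : ℕ} (h1 : 1 ≤ i) (h2 : i < n) (w : Equiv.Perm (Fin n)) (x : ℕ) :
    act (w * simpleRefl n i) x = act w (Equiv.swap i (i + 1) x) := by
  rw [act_mul, act_simpleRefl h1 h2]

end Act

section Inversions

variable {n : ℕ}

def inversions (w : Equiv.Perm (Fin n)) : Finset (Fin n × Fin n) :=
  Finset.univ.filter fun p => p.1 < p.2 ∧ w p.2 < w p.1

@[simp]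
lemma mem_inversions (w : Equiv.Perm (Fin n)) (p : Fin n × Fin n) :
    p ∈ inversions w ↔ p.1 < p.2 ∧ w p.2 < w p.1 := by
  simp [inversions]

lemma len_eq_card_inversions (w : Equiv.Perm (Fin n)) : len w = (inversions w).card := rfl

lemma swap_lt_swap_of_lt {k k' a b : Fin n} (hk : (k : ℕ) + 1 = k') (hab : a < b)
    (hne : (a, b) ≠ (k, k')) : Equiv.swap k k' a < Equiv.swap k k' b := by
  simp only [ne_eq, Prod.mk.injEq, Fin.ext_iff] at hne
  rw [Fin.lt_def] at hab ⊢
  simp only [Equiv.swap_apply_def]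
  split_ifs <;> simp only [Fin.ext_iff] at * <;> omega

lemma inversions_mul_swap (w : Equiv.Perm (Fin n)) {k k' : Fin n} (hk : (k : ℕ) + 1 = k')
    (hlt : w k < w k') :
    inversions (w * Equiv.swap k k') =
      insert (k, k')
        ((inversions w).map ((Equiv.swap k k').prodCongr (Equiv.swap k k')).toEmbedding) := by
  ext ⟨a, b⟩
  simp only [Finset.mem_insert, Finset.mem_map_equiv, mem_inversions, Equiv.prodCongr_symm,
    Equiv.symm_swap, Equiv.prodCongr_apply, Prod.map, Equiv.Perm.mul_apply]
  constructor
  · rintro ⟨hab, hw⟩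
    by_cases hne : (a, b) = (k, k')
    · exact Or.inl hne
    · exact Or.inr ⟨swap_lt_swap_of_lt hk hab hne, hw⟩
  · rintro (hkk' | ⟨hab, hw⟩)
    · obtain ⟨rfl, rfl⟩ := Prod.mk.inj hkk'
      rw [Equiv.swap_apply_left, Equiv.swap_apply_right, Fin.lt_def]
      exact ⟨by omega, hlt⟩
    · have hne : (Equiv.swap k k' a, Equiv.swap k k' b) ≠ (k, k') := by
        intro h
        obtain ⟨ha, hb⟩ := Prod.mk.inj h
        rw [ha, hb] at hw
        exact hw.asymm hlt
      have hba := swap_lt_swap_of_lt hk hab hne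
      rw [Equiv.swap_apply_self, Equiv.swap_apply_self] at hba
      exact ⟨hba, hw⟩

lemma len_mul_swap (w : Equiv.Perm (Fin n)) {k k' : Fin n} (hk : (k : ℕ) + 1 = k')
    (hlt : w k < w k') : len (w * Equiv.swap k k') = len w + 1 := by
  have hnotMem : (k, k') ∉
      (inversions w).map ((Equiv.swap k k').prodCongr (Equiv.swap k k')).toEmbedding := by
    simp only [Finset.mem_map_equiv, mem_inversions, Equiv.prodCongr_symm, Equiv.symm_swap,
      Equiv.prodCongr_apply, Prod.map, Equiv.swap_apply_left, Equiv.swap_apply_right, Fin.lt_def]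
    omega
  rw [len_eq_card_inversions, len_eq_card_inversions, inversions_mul_swap w hk hlt,
    Finset.card_insert_of_notMem hnotMem, Finset.card_map]

lemma len_mul_simpleRefl (w : Equiv.Perm (Fin n)) {i : ℕ} (h1 : 1 ≤ i) (h2 : i < n)
    (h : act w i < act w (i + 1)) : len (w * simpleRefl n i) = len w + 1 := by
  rw [act_of_mem w h1 h2.le, act_of_mem w (by omega) h2] at h
  rw [simpleRefl, dif_pos ⟨h1, h2⟩]
  exact len_mul_swap w (by dsimp only; omega)
    (by simpa only [Fin.lt_def, Nat.succ_sub_one, add_lt_add_iff_right] using h)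

end Inversions

section Dominant

variable {n : ℕ} {w : Equiv.Perm (Fin n)} {i j : ℕ}

lemma mem_rd_of_mem_domP {p : ℕ × ℕ} (hp : p ∈ domP w) : p ∈ rd w :=
  hp.2.2 p hp.1 hp.2.1 le_rfl le_rfl

lemma domP_mono {p q : ℕ × ℕ} (hp : p ∈ domP w) (h1 : 1 ≤ q.1) (h2 : 1 ≤ q.2)
    (h3 : q.1 ≤ p.1) (h4 : q.2 ≤ p.2) : q ∈ domP w :=
  ⟨h1, h2, fun r r1 r2 r3 r4 => hp.2.2 r r1 r2 (r3.trans h3) (r4.trans h4)⟩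

lemma act_eq_of_not_mem_rd (hi : 1 ≤ i) (hj : 1 ≤ j) (hup : 1 < i → (i - 1, j) ∈ rd w)
    (hleft : 1 < j → (i, j - 1) ∈ rd w) (hij : (i, j) ∉ rd w) : act w i = j := by
  have hj_le : j ≤ act w i := by
    rcases hj.eq_or_lt with rfl | hj1
    · exact one_le_act w hi
    · have := (hleft hj1).2.2.1
      dsimp only at this
      omega
  have hi_le : i ≤ act w⁻¹ j := by
    rcases hi.eq_or_lt with rfl | hi1
    · exact one_le_act w⁻¹ hj
    · have := (hup hi1).2.2.2
      dsimp only at this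
      omega
  by_contra hne
  have hinv : act w⁻¹ j ≠ i := fun h => hne (by rw [← h, act_act_inv])
  exact hij ⟨hi, hj, show j < act w i by omega, show i < act w⁻¹ j by omega⟩

lemma addableP.not_mem_rd (h : addableP w i j) : (i, j) ∉ rd w := by
  obtain ⟨hi, hj, hnot, hup, hleft⟩ := h
  refine fun hrd => hnot ⟨hi, hj, fun q hq1 hq2 hqi hqj => ?_⟩
  rcases hqj.lt_or_eq with hqj | hqj
  · exact (hleft (by omega)).2.2 q hq1 hq2 hqi (by dsimp only; omega)
  rcases hqi.lt_or_eq with hqi | hqi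
  · exact (hup (by omega)).2.2 q hq1 hq2 (by dsimp only; omega) hqj.le
  · rwa [show q = (i, j) from Prod.ext hqi hqj]

lemma addableP.act_eq (h : addableP w i j) : act w i = j :=
  act_eq_of_not_mem_rd h.1 h.2.1 (fun hi => mem_rd_of_mem_domP (h.2.2.2.1 hi))
    (fun hj => mem_rd_of_mem_domP (h.2.2.2.2 hj)) h.not_mem_rd

lemma mem_domP_succ_of_lt_act {c : ℕ} (hic : (i, c) ∈ domP w) (hc : c < act w (i + 1)) :
    (i + 1, c) ∈ domP w := by
  refine ⟨by omega, hic.2.1, fun q hq1 hq2 hqi hqc => ?_⟩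
  dsimp only at hqi hqc ⊢
  rcases hqi.lt_or_eq with hqi | hqi
  · exact hic.2.2 q hq1 hq2 (by omega) hqc
  have hrd : (i, q.2) ∈ rd w := hic.2.2 (i, q.2) hic.1 hq2 le_rfl hqc
  have hinv : act w⁻¹ q.2 ≠ i + 1 := fun h => by
    have := act_act_inv w q.2
    rw [h] at this
    omega
  refine ⟨hq1, hq2, ?_, ?_⟩
  · rw [hqi]
    omega
  · have := hrd.2.2.2
    dsimp only at this
    omega

lemma alphaCell.act_lt_act_succ (h : alphaCell w i j) : act w i < act w (i + 1) := by
  obtain ⟨hadd, hn, hmin⟩ := h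
  have hwi : act w i = j := hadd.act_eq
  have hm1 : 1 ≤ act w (i + 1) := one_le_act w (by omega)
  have hne : act w (i + 1) ≠ j := fun he => by
    have := act_injective w (hwi.trans he.symm)
    omega
  by_contra hle
  have hdom : (i, j - 1) ∈ domP w := hadd.2.2.2.2 (by omega)
  have hcol : ∀ c, 1 ≤ c → c < j → (i, c) ∈ domP w := fun c hc1 hcj =>
    domP_mono hdom hadd.1 hc1 le_rfl (by dsimp only; omega)
  have hadd' : addableP w (i + 1) (act w (i + 1)) :=
    ⟨by omega, hm1, fun hd => (mem_rd_of_mem_domP hd).2.2.1.false,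
      fun _ => by simpa using hcol _ hm1 (by omega),
      fun hm => mem_domP_succ_of_lt_act (hcol _ (by omega) (by omega)) (by omega)⟩
  have := hmin _ _ hadd' (by omega)
  omega

end Dominant

section Neighbours

variable {n : ℕ} {w : Equiv.Perm (Fin n)} {i : ℕ}

lemma isNbrP_succ_of_act_lt (h : act w i < act w (i + 1)) : isNbrP w i (i + 1) :=
  ⟨Nat.le_succ i, h.le, fun he => by simp at he, fun _ h1 h2 _ _ => by omega⟩

lemma isNbrP.mul_simpleRefl {a : ℕ} (h1 : 1 ≤ i) (h2 : i < n) (h : isNbrP w i a)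
    (ha : a ≠ i + 1) : isNbrP (w * simpleRefl n i) (i + 1) a := by
  obtain ⟨hia, hle, hne, hempty⟩ := h
  have hai : a ≠ i := by
    rintro rfl
    exact hne rfl
  have hsucc : act (w * simpleRefl n i) (i + 1) = act w i := by
    rw [act_mul_simpleRefl h1 h2, Equiv.swap_apply_right]
  have hfar : ∀ x, i + 1 < x → act (w * simpleRefl n i) x = act w x := fun x hx => by
    rw [act_mul_simpleRefl h1 h2, Equiv.swap_apply_of_ne_of_ne (by omega) (by omega)]
  have ha' : i + 1 < a := by omega
  refine ⟨by omega, by rwa [hsucc, hfar a ha'], fun he => ha (Prod.mk.inj he).1,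
    fun a' h1' h2' h3 h4 => ?_⟩
  rcases h1'.eq_or_lt with rfl | hlt
  · exact Or.inl rfl
  rw [hsucc, hfar a' hlt] at h3
  rw [hfar a' hlt, hfar a ha'] at h4
  exact Or.inr ((hempty a' (by omega) h2' h3 h4).resolve_left (by omega))

end Neighbours

theorem phi_succ_mem_and_subset_general {n : ℕ} (w : Equiv.Perm (Fin n)) (i j : ℕ)
    (h : alphaCell w i j) :
    isNbrP w i (i + 1) ∧ len (w * simpleRefl n i) = len w + 1 ∧
      ∀ a, isNbrP w i a → a ≠ i + 1 → isNbrP (w * simpleRefl n i) (i + 1) a := by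
  have hlt : act w i < act w (i + 1) := h.act_lt_act_succ
  obtain ⟨⟨hi, hj, -⟩, hn, -⟩ := h
  have hin : i < n := by omega
  exact ⟨isNbrP_succ_of_act_lt hlt, len_mul_simpleRefl w hi hin hlt,
    fun _ ha hne => ha.mul_simpleRefl hi hin hne⟩

/-- Lemma 5.1(2)-(3): if `w ≠ w₀` and `(i,j)` is an addable cell of `dom(w)`
with `j = α(w)`, then `i+1 ∈ φ_i(w)` (i.e., `(i+1, w(i+1))` is a neighbor of
`(i, w(i))`, equivalently `ℓ(w t_{i,i+1}) = ℓ(w) + 1`), and moreover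
`φ_i(w) \ {i+1} ⊆ φ_{i+1}(w s_i)`. -/
theorem phi_succ_mem_and_subset {n : ℕ} (w : Equiv.Perm (Fin n)) (i j : ℕ)
    (hw : w ≠ longest n) (h : alphaCell w i j) :
    isNbrP w i (i + 1) ∧ len (w * simpleRefl n i) = len w + 1 ∧
      ∀ a, isNbrP w i a → a ≠ i + 1 → isNbrP (w * simpleRefl n i) (i + 1) a :=
  phi_succ_mem_and_subset_general w i j h
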